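/- arXiv:2402.10842 — 2 statements merged into one kernel-verified Lean document; each statement's English description precedes it below -/
import Mathlib

section
/- Let G be a simple graph of order n with minimum degree δ(G) = 1, let x be a vertex of degree 1 in G, and let y be the unique neighbor of x. Then PC(G) = n if and only if y is a full vertex (i.e., y is adjacent to all other vertices of G). -/
namespace PCPaper

variable {V : Type*}

/-- `S` is a dominating set of `G`. -/
def IsDomSet (G : SimpleGraph V) (S : Set V) : Prop :=
  ∀ v : V, v ∈ S ∨ ∃ u ∈ S, G.Adj u v

/-- `S` is a paired dominating set of `G`: a dominating set such that the subgraph of `G`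
induced by `S` contains a perfect matching (a matching whose vertex set is exactly `S`). -/
def IsPairedDomSet (G : SimpleGraph V) (S : Set V) : Prop :=
  IsDomSet G S ∧ ∃ M : G.Subgraph, M.verts = S ∧ M.IsMatching

/-- Disjoint sets `A`, `B`, neither a paired dominating set, whose union is one. -/
def PairedCoalition (G : SimpleGraph V) (A B : Set V) : Prop :=
  Disjoint A B ∧ ¬ IsPairedDomSet G A ∧ ¬ IsPairedDomSet G B ∧ IsPairedDomSet G (A ∪ B)

variable [Fintype V] [DecidableEq V]

/-- `π` is a paired coalition partition of `G`: no part is a paired dominating set and every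
part forms a paired coalition with some other part. -/
def IsPCPartition (G : SimpleGraph V) (π : Finpartition (Finset.univ : Finset V)) : Prop :=
  ∀ A ∈ π.parts, ¬ IsPairedDomSet G (A : Set V) ∧
    ∃ B ∈ π.parts, B ≠ A ∧ PairedCoalition G (A : Set V) (B : Set V)

/-- The paired coalition number: the maximum number of parts of a pc-partition of `G`,
and `0` if `G` admits no pc-partition. -/
noncomputable def pcNumber (G : SimpleGraph V) : ℕ :=
  sSup {k | ∃ π : Finpartition (Finset.univ : Finset V), IsPCPartition G π ∧ π.parts.card = k}

/-- The paired coalition graph of a partition `π` of `G`: vertices are the parts of `π`,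
two parts being adjacent iff they form a paired coalition in `G`. -/
def PCG (G : SimpleGraph V) (π : Finpartition (Finset.univ : Finset V)) :
    SimpleGraph {A : Finset V // A ∈ π.parts} where
  Adj A B := PairedCoalition G ((A : Finset V) : Set V) ((B : Finset V) : Set V)
  symm := by
    constructor
    rintro A B ⟨h1, h2, h3, h4⟩
    exact ⟨h1.symm, h3, h2, by rwa [Set.union_comm]⟩
  loopless := by
    constructor
    rintro A ⟨h1, h2, h3, h4⟩
    exact h2 (by rwa [Set.union_self] at h4)

end PCPaper


/-! A singleton is never a paired dominating set, and a two-element set `{a, b}` is one exactly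
when `ab` is an edge and `{a, b}` dominates. Hence `PC(G) = n`, which forces the partition into
singletons, means that every vertex `v` has a neighbour `u` with `{v, u}` dominating. For the leaf
`x` the only candidate is `u = y`, and `{x, y}` dominates exactly when `y` is full; conversely a
full vertex `y` pairs with every other vertex, and with `x`. -/

namespace Finpartition

variable {α : Type*} [DecidableEq α] {s : Finset α}

theorem card_eq_one_of_card_parts_eq (P : Finpartition s) (hP : P.parts.card = s.card)
    {t : Finset α} (ht : t ∈ P.parts) : t.card = 1 := by
  have hsum : ∑ _u ∈ P.parts, 1 = ∑ u ∈ P.parts, u.card := by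
    rw [P.sum_card_parts, Finset.sum_const, smul_eq_mul, mul_one, hP]
  have := (Finset.sum_eq_sum_iff_of_le
    fun u hu => (P.nonempty_of_mem_parts hu).card_pos).1 hsum t ht
  omega

theorem eq_bot_of_card_parts_eq (P : Finpartition s) (hP : P.parts.card = s.card) : P = ⊥ := by
  ext t
  rw [mem_bot_iff]
  constructor
  · intro ht
    obtain ⟨a, rfl⟩ := Finset.card_eq_one.1 (P.card_eq_one_of_card_parts_eq hP ht)
    exact ⟨a, P.le ht (Finset.mem_singleton_self a), rfl⟩
  · rintro ⟨a, ha, rfl⟩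
    have hpart := P.part_mem.2 ha
    obtain ⟨b, hb⟩ := Finset.card_eq_one.1 (P.card_eq_one_of_card_parts_eq hP hpart)
    have hab : a = b := Finset.mem_singleton.1 (hb ▸ P.mem_part ha)
    rw [hab, ← hb]
    exact hpart

end Finpartition

namespace PCPaper

variable {V : Type*} (G : SimpleGraph V)

theorem not_isPairedDomSet_singleton (v : V) : ¬ IsPairedDomSet G {v} := by
  rintro ⟨-, M, hMv, hM⟩
  obtain ⟨w, hw, -⟩ := hM (by rw [hMv]; rfl)
  have hwv : w = v := by simpa [hMv] using hw.snd_mem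
  exact G.irrefl (hwv ▸ hw.adj_sub)

theorem isPairedDomSet_pair_iff {a b : V} :
    IsPairedDomSet G {a, b} ↔ G.Adj a b ∧ IsDomSet G {a, b} := by
  constructor
  · rintro ⟨hdom, M, hMv, hM⟩
    obtain ⟨w, hw, -⟩ := hM (show a ∈ M.verts by simp [hMv])
    have hwa : w ≠ a := fun h => G.irrefl (h ▸ hw.adj_sub)
    have hwb : w = b := by simpa [hMv, hwa] using hw.snd_mem
    exact ⟨hwb ▸ hw.adj_sub, hdom⟩
  · rintro ⟨hab, hdom⟩
    exact ⟨hdom, G.subgraphOfAdj hab, by simp, .subgraphOfAdj hab⟩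

theorem pairedCoalition_singleton_iff {u v : V} :
    PairedCoalition G {v} {u} ↔ G.Adj v u ∧ IsDomSet G {v, u} := by
  rw [← isPairedDomSet_pair_iff]
  refine ⟨fun h => by simpa [Set.singleton_union, Set.pair_comm] using h.2.2.2, fun h => ?_⟩
  have hvu : v ≠ u := ((isPairedDomSet_pair_iff G).1 h).1.ne
  refine ⟨Set.disjoint_singleton.2 hvu, not_isPairedDomSet_singleton G v,
    not_isPairedDomSet_singleton G u, ?_⟩
  simpa [Set.singleton_union, Set.pair_comm] using h

theorem IsDomSet.of_full {S : Set V} {y : V} (hy : y ∈ S) (hfull : ∀ w, w ≠ y → G.Adj y w) :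
    IsDomSet G S := by
  intro w
  by_cases hwy : w = y
  · exact .inl (hwy ▸ hy)
  · exact .inr ⟨y, hy, hfull w hwy⟩

variable [Fintype V] [DecidableEq V]

theorem isPCPartition_bot_iff :
    IsPCPartition G ⊥ ↔ ∀ v, ∃ u, G.Adj v u ∧ IsDomSet G {v, u} := by
  simp only [IsPCPartition, Finpartition.mem_bot_iff, Finset.mem_univ, true_and,
    forall_exists_index, forall_apply_eq_imp_iff, exists_exists_eq_and, Finset.coe_singleton,
    ne_eq, Finset.singleton_inj, pairedCoalition_singleton_iff,
    not_isPairedDomSet_singleton G, not_false_eq_true]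
  exact forall_congr' fun v => exists_congr fun u => ⟨fun h => h.2, fun h => ⟨h.1.ne', h⟩⟩

theorem pcNumber_eq_card_iff : pcNumber G = Fintype.card V ↔ IsPCPartition G ⊥ := by
  set K := {k | ∃ π : Finpartition (Finset.univ : Finset V), IsPCPartition G π ∧ π.parts.card = k}
  have hub : Fintype.card V ∈ upperBounds K := by
    rintro k ⟨π, -, rfl⟩
    simpa using π.card_parts_le_card
  constructor
  · intro hpc
    rcases K.eq_empty_or_nonempty with hempty | hne
    · have : IsEmpty V := by
        rw [← Fintype.card_eq_zero_iff, ← hpc]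
        show sSup K = 0
        rw [hempty, csSup_empty, Nat.bot_eq_zero]
      intro A hA
      exact absurd hA (by simp [Finset.univ_eq_empty])
    · obtain ⟨π, hπ, hcard⟩ := Nat.sSup_mem hne ⟨_, hub⟩
      rwa [← π.eq_bot_of_card_parts_eq (by rw [hcard, Finset.card_univ]; exact hpc)]
  · intro hbot
    have hmem : Fintype.card V ∈ K := ⟨⊥, hbot, by rw [Finpartition.card_bot, Finset.card_univ]⟩
    exact le_antisymm (csSup_le ⟨_, hmem⟩ hub) (le_csSup ⟨_, hub⟩ hmem)

end PCPaper

open PCPaper in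
theorem stmt_1_general {V : Type*} [Fintype V] [DecidableEq V] (G : SimpleGraph V)
    [DecidableRel G.Adj] (x y : V)
    (hx : G.degree x = 1) (hxy : G.Adj x y) :
    pcNumber G = Fintype.card V ↔ ∀ w, w ≠ y → G.Adj y w := by
  rw [pcNumber_eq_card_iff, isPCPartition_bot_iff]
  have hleaf : ∀ w, G.Adj x w → w = y := by
    obtain ⟨u, -, hu⟩ := SimpleGraph.degree_eq_one_iff_existsUnique_adj.1 hx
    exact fun w hw => (hu w hw).trans (hu y hxy).symm
  constructor
  · intro hpair w hwy
    obtain ⟨u, hxu, hdom⟩ := hpair x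
    obtain rfl := hleaf u hxu
    rcases hdom w with hw | ⟨z, hz, hzw⟩
    · obtain rfl : w = x := by simpa [hwy] using hw
      exact hxy.symm
    · rcases hz with rfl | rfl
      · exact absurd (hleaf w hzw) hwy
      · exact hzw
  · intro hfull v
    by_cases hvy : v = y
    · subst hvy
      exact ⟨x, hxy.symm, IsDomSet.of_full G (by simp) hfull⟩
    · exact ⟨y, (hfull v hvy).symm, IsDomSet.of_full G (by simp) hfull⟩

open PCPaper in
/-- For a graph with minimum degree 1, with `x` a vertex of degree 1 and `y` its neighbor,
`PC(G) = n` iff `y` is a full vertex. -/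
theorem stmt_1 {V : Type*} [Fintype V] [DecidableEq V] (G : SimpleGraph V)
    [DecidableRel G.Adj] (x y : V)
    (hδ : ∀ v, 1 ≤ G.degree v) (hx : G.degree x = 1) (hxy : G.Adj x y) :
    pcNumber G = Fintype.card V ↔ ∀ w, w ≠ y → G.Adj y w :=
  stmt_1_general G x y hx hxy
end

section
/- For the path P_n on n ≥ 2 vertices, PC(P_n) = 2 if n = 2 or n = 4, and PC(P_n) = 3 otherwise. -/
/-
Vertex `1` is the only neighbour of the leaf `0`, so it lies in every paired dominating set of
`P_n`; hence every part of a pc-partition other than the part `P` containing `1` must have `P` as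
its partner. If `P` does not dominate some vertex `w`, every other part contains a neighbour of
`w`. Otherwise `P` has no perfect matching, so it has a maximal run of odd length; since every
maximal run of a set with a perfect matching in a path has even length, every other part contains
one of the two vertices flanking that run. Either way there are at most two parts besides `P`. In `P_4` the
vertex `2` lies in every paired dominating set as well, which leaves room for only two parts.
The lower bounds come from the partitions `{0}, {2}, rest` (odd `n`), `{0, 3}, {2, 5}, rest`
(even `n ≥ 6`), `{0}, {1}` and `{0, 1}, {2, 3}`.
-/

open Finset SimpleGraph

namespace Finpartition

variable {V : Type*} [DecidableEq V] {s : Finset V}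

lemma card_le_card_of_forall_exists_mem (π : Finpartition s) {Q : Finset (Finset V)}
    (hQ : Q ⊆ π.parts) (F : Finset V) (hF : ∀ X ∈ Q, ∃ v ∈ F, v ∈ X) : #Q ≤ #F := by
  refine (card_le_card (t := F.image π.part) fun X hX => ?_).trans card_image_le
  obtain ⟨v, hvF, hvX⟩ := hF X hX
  exact mem_image.2 ⟨v, hvF, π.part_eq_of_mem (hQ hX) hvX⟩

lemma exists_ne_notMem_of_two_lt_card (π : Finpartition s) {P : Finset V} (hP : P ∈ π.parts)
    (h : 2 < #π.parts) : ∃ y z, y ≠ z ∧ y ∉ P ∧ z ∉ P := by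
  obtain ⟨Y, hY, Z, hZ, hYZ⟩ := one_lt_card.1 <| show 1 < #(π.parts.erase P) by
    rw [card_erase_of_mem hP]; omega
  obtain ⟨hYP, hY⟩ := mem_erase.1 hY
  obtain ⟨hZP, hZ⟩ := mem_erase.1 hZ
  obtain ⟨y, hy⟩ := π.nonempty_of_mem_parts hY
  obtain ⟨z, hz⟩ := π.nonempty_of_mem_parts hZ
  exact ⟨y, z, fun h => disjoint_left.1 (π.disjoint hY hZ hYZ) hy (h ▸ hz),
    disjoint_left.1 (π.disjoint hY hP hYP) hy, disjoint_left.1 (π.disjoint hZ hP hZP) hz⟩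

end Finpartition

namespace SimpleGraph.Subgraph

variable {V : Type*} {G : SimpleGraph V}

lemma exists_isMatching_of_involutive_on (S : Set V) (g : V → V)
    (hg : ∀ v ∈ S, g v ∈ S ∧ g (g v) = v ∧ G.Adj v (g v)) :
    ∃ M : G.Subgraph, M.verts = S ∧ M.IsMatching := by
  refine ⟨{ verts := S
            Adj := fun v w => v ∈ S ∧ g v = w
            adj_sub := ?_
            edge_vert := fun h => h.1
            symm := ⟨?_⟩ }, rfl, ?_⟩
  · rintro v w ⟨hv, rfl⟩
    exact (hg v hv).2.2
  · rintro v w ⟨hv, rfl⟩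
    exact ⟨(hg v hv).1, (hg v hv).2.1⟩
  · intro v hv
    exact ⟨g v, ⟨hv, rfl⟩, fun w hw => hw.2.symm⟩

lemma IsMatching.even_card_of_forall_adj_mem {M : G.Subgraph} (hM : M.IsMatching)
    {T : Finset V} (hT : ↑T ⊆ M.verts) (hclosed : ∀ v ∈ T, ∀ w, M.Adj v w → w ∈ T) :
    Even #T := by
  have hMT : (M.induce T).IsMatching := by
    rintro v (hv : v ∈ T)
    obtain ⟨w, hvw, huniq⟩ := hM (hT hv)
    exact ⟨w, ⟨hv, hclosed v hv w hvw, hvw⟩, fun u hu => huniq u hu.2.2⟩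
  classical
  simpa using @hMT.even_card _ _ _ (inferInstanceAs (Fintype (T : Set V)))

end SimpleGraph.Subgraph

namespace PCPaper

variable {V : Type*} {G : SimpleGraph V}

lemma IsPairedDomSet.exists_adj_mem {S : Set V} (h : IsPairedDomSet G S) (v : V) :
    ∃ u ∈ S, G.Adj u v := by
  obtain ⟨hdom, M, rfl, hM⟩ := h
  by_cases hv : v ∈ M.verts
  · obtain ⟨w, hvw, -⟩ := hM hv
    exact ⟨w, M.edge_vert hvw.symm, (M.adj_sub hvw).symm⟩
  · exact (hdom v).resolve_left hv

lemma not_isPairedDomSet_of_forall_not_adj {S : Set V} (v : V) (h : ∀ u ∈ S, ¬ G.Adj u v) :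
    ¬ IsPairedDomSet G S := fun hS =>
  let ⟨u, hu, huv⟩ := hS.exists_adj_mem v
  h u hu huv

lemma PairedCoalition.symm {A B : Set V} (h : PairedCoalition G A B) : PairedCoalition G B A :=
  ⟨h.1.symm, h.2.2.1, h.2.1, Set.union_comm A B ▸ h.2.2.2⟩

lemma PairedCoalition.ne {A B : Set V} (h : PairedCoalition G A B) : A ≠ B := by
  rintro rfl
  exact h.2.1 (by simpa using h.2.2.2)

lemma PairedCoalition.nonempty {A B : Set V} (h : PairedCoalition G A B) : A.Nonempty := by
  rw [Set.nonempty_iff_ne_empty]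
  rintro rfl
  exact h.2.2.1 (by simpa using h.2.2.2)

variable [Fintype V] [DecidableEq V]

lemma pcNumber_eq {k : ℕ}
    (hk : ∃ π : Finpartition (univ : Finset V), IsPCPartition G π ∧ #π.parts = k)
    (hle : ∀ π : Finpartition (univ : Finset V), IsPCPartition G π → #π.parts ≤ k) :
    pcNumber G = k :=
  IsGreatest.csSup_eq ⟨hk, by rintro _ ⟨π, hπ, rfl⟩; exact hle π hπ⟩

lemma isPCPartition_of_forall_exists {π : Finpartition (univ : Finset V)}
    (h : ∀ A ∈ π.parts, ∃ B ∈ π.parts, PairedCoalition G (A : Set V) (B : Set V)) :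
    IsPCPartition G π := fun A hA =>
  let ⟨B, hB, hAB⟩ := h A hA
  ⟨hAB.2.1, B, hB, fun hBA => hAB.ne (congrArg _ hBA.symm), hAB⟩

section Partner

variable {π : Finpartition (univ : Finset V)} {x : V}

lemma part_eq_of_isPairedDomSet_union (hx : ∀ S, IsPairedDomSet G S → x ∈ S)
    {X B : Finset V} (hB : B ∈ π.parts) (hxX : x ∉ X) (hXB : IsPairedDomSet G (↑X ∪ ↑B)) :
    π.part x = B :=
  π.part_eq_of_mem hB ((hx _ hXB).resolve_left hxX)

lemma IsPCPartition.isPairedDomSet_union_part (hπ : IsPCPartition G π)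
    (hx : ∀ S, IsPairedDomSet G S → x ∈ S) {X : Finset V} (hX : X ∈ π.parts) (hxX : x ∉ X) :
    IsPairedDomSet G (↑X ∪ ↑(π.part x)) := by
  obtain ⟨-, B, hB, -, -, -, -, hXB⟩ := hπ X hX
  rwa [part_eq_of_isPairedDomSet_union hx hB hxX hXB]

end Partner

lemma exists_isPCPartition_card_two (p : V → Prop) [DecidablePred p]
    (hp : ¬ IsPairedDomSet G {v | p v}) (hnp : ¬ IsPairedDomSet G {v | ¬ p v})
    (huniv : IsPairedDomSet G Set.univ) :
    ∃ π : Finpartition (univ : Finset V), IsPCPartition G π ∧ #π.parts = 2 := by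
  set A := univ.filter p
  set B := univ.filter fun v => ¬ p v
  have hAB : PairedCoalition G A B := by
    simp only [A, B, coe_filter_univ]
    refine ⟨Set.disjoint_left.2 fun v h h' => h' h, hp, hnp, ?_⟩
    simpa [← Set.ofPred_or, em] using huniv
  let π : Finpartition (univ : Finset V) :=
    (Finpartition.indiscrete (coe_nonempty.1 hAB.symm.nonempty).ne_empty).extend
      (coe_nonempty.1 hAB.nonempty).ne_empty (disjoint_coe.1 hAB.1).symm
      (by ext; simp [A, B, em'])
  refine ⟨π, isPCPartition_of_forall_exists fun X hX => ?_, ?_⟩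
  · simp only [π, Finpartition.extend_parts, Finpartition.indiscrete_parts, mem_insert,
      mem_singleton] at hX
    rcases hX with rfl | rfl
    · exact ⟨B, by simp [π], hAB⟩
    · exact ⟨A, by simp [π], hAB.symm⟩
  · rw [Finpartition.card_extend, Finpartition.indiscrete_parts, card_singleton]

lemma exists_isPCPartition_card_three (p q : V → Prop) [DecidablePred p] [DecidablePred q]
    (hpq : ∀ v, p v → ¬ q v) (hp : ¬ IsPairedDomSet G {v | p v})
    (hq : ¬ IsPairedDomSet G {v | q v}) (hr : ¬ IsPairedDomSet G {v | ¬ p v ∧ ¬ q v})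
    (hnq : IsPairedDomSet G {v | ¬ q v}) (hnp : IsPairedDomSet G {v | ¬ p v}) :
    ∃ π : Finpartition (univ : Finset V), IsPCPartition G π ∧ #π.parts = 3 := by
  set A := univ.filter p
  set B := univ.filter q
  set C := univ.filter fun v => ¬ p v ∧ ¬ q v
  have hAC : PairedCoalition G A C := by
    simp only [A, C, coe_filter_univ]
    refine ⟨Set.disjoint_left.2 fun v h h' => h'.1 h, hp, hr, ?_⟩
    convert hnq using 1
    ext v
    simp only [Set.mem_union, Set.mem_ofPred_eq]
    have := hpq v
    tauto
  have hBC : PairedCoalition G B C := by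
    simp only [B, C, coe_filter_univ]
    refine ⟨Set.disjoint_left.2 fun v h h' => h'.2 h, hq, hr, ?_⟩
    convert hnp using 1
    ext v
    simp only [Set.mem_union, Set.mem_ofPred_eq]
    have := hpq v
    tauto
  have hABC : Disjoint (C ∪ B) A := by
    rw [disjoint_union_left]
    exact ⟨(disjoint_coe.1 hAC.1).symm, disjoint_filter.2 fun v _ hq hp => hpq v hp hq⟩
  let π : Finpartition (univ : Finset V) :=
    ((Finpartition.indiscrete (coe_nonempty.1 hAC.symm.nonempty).ne_empty).extend
      (coe_nonempty.1 hBC.nonempty).ne_empty (disjoint_coe.1 hBC.1).symm rfl).extend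
      (coe_nonempty.1 hAC.nonempty).ne_empty hABC
      (by ext v; simp only [A, B, C, sup_eq_union, mem_union, mem_filter, mem_univ, true_and]; tauto)
  refine ⟨π, isPCPartition_of_forall_exists fun X hX => ?_, ?_⟩
  · simp only [π, Finpartition.extend_parts, Finpartition.indiscrete_parts, mem_insert,
      mem_singleton] at hX
    rcases hX with rfl | rfl | rfl
    · exact ⟨C, by simp [π], hAC⟩
    · exact ⟨C, by simp [π], hBC⟩
    · exact ⟨A, by simp [π], hAC.symm⟩
  · rw [Finpartition.card_extend, Finpartition.card_extend, Finpartition.indiscrete_parts,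
      card_singleton]

section PathGraph

variable {n : ℕ}

lemma exists_isMatching_pathGraph (p : ℕ → Prop) (g : ℕ → ℕ)
    (hg : ∀ k < n, p k → g k < n ∧ p (g k) ∧ g (g k) = k ∧ (k + 1 = g k ∨ g k + 1 = k)) :
    ∃ M : (pathGraph n).Subgraph, M.verts = {v : Fin n | p v} ∧ M.IsMatching := by
  classical
  refine Subgraph.exists_isMatching_of_involutive_on _
    (fun v => if h : g v < n then ⟨g v, h⟩ else v) fun v (hv : p v) => ?_
  obtain ⟨hlt, hp, hgg, hadj⟩ := hg v v.isLt hv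
  simp only [dif_pos hlt, hgg, v.isLt]
  exact ⟨hp, rfl, pathGraph_adj.2 hadj⟩

lemma isPairedDomSet_pathGraph (p : ℕ → Prop) (d g : ℕ → ℕ)
    (hd : ∀ k < n, ¬ p k → d k < n ∧ p (d k) ∧ (d k + 1 = k ∨ k + 1 = d k))
    (hg : ∀ k < n, p k → g k < n ∧ p (g k) ∧ g (g k) = k ∧ (k + 1 = g k ∨ g k + 1 = k)) :
    IsPairedDomSet (pathGraph n) {v : Fin n | p v} := by
  refine ⟨fun v => or_iff_not_imp_left.2 fun hv => ?_, exists_isMatching_pathGraph p g hg⟩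
  obtain ⟨hlt, hp, hadj⟩ := hd v v.isLt hv
  exact ⟨⟨d v, hlt⟩, hp, pathGraph_adj.2 hadj⟩

lemma isPairedDomSet_pathGraph_univ (he : Even n) : IsPairedDomSet (pathGraph n) Set.univ := by
  simpa using isPairedDomSet_pathGraph (n := n) (fun _ => True) id
    (fun k => if k % 2 = 0 then k + 1 else k - 1) (by simp) (by grind)

lemma not_isPairedDomSet_pathGraph (p : ℕ → Prop) (a : ℕ) (ha : a < n)
    (h : ∀ k < n, p k → k + 1 ≠ a ∧ a + 1 ≠ k) :
    ¬ IsPairedDomSet (pathGraph n) {v : Fin n | p v} :=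
  not_isPairedDomSet_of_forall_not_adj ⟨a, ha⟩ fun u hu hadj =>
    (h u u.isLt hu).elim fun h₁ h₂ => (pathGraph_adj.1 hadj).elim h₁ h₂

lemma one_mem_of_isPairedDomSet_pathGraph (hn : 2 ≤ n) {S : Set (Fin n)}
    (h : IsPairedDomSet (pathGraph n) S) : ⟨1, by omega⟩ ∈ S := by
  obtain ⟨u, hu, hadj⟩ := h.exists_adj_mem ⟨0, by omega⟩
  obtain rfl : u = ⟨1, by omega⟩ := by
    rw [pathGraph_adj] at hadj
    ext; simp only at hadj ⊢; omega
  exact hu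

lemma sub_two_mem_of_isPairedDomSet_pathGraph (hn : 2 ≤ n) {S : Set (Fin n)}
    (h : IsPairedDomSet (pathGraph n) S) : ⟨n - 2, by omega⟩ ∈ S := by
  obtain ⟨u, hu, hadj⟩ := h.exists_adj_mem ⟨n - 1, by omega⟩
  obtain rfl : u = ⟨n - 2, by omega⟩ := by
    rw [pathGraph_adj] at hadj
    ext; simp only at hadj ⊢; omega
  exact hu

lemma exists_isMatching_pathGraph_of_even_count (p : ℕ → Prop) [DecidablePred p]
    (hp : ∀ k, p k → k < n) (h : ∀ k ≤ n, ¬ p k → Even (Nat.count p k)) :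
    ∃ M : (pathGraph n).Subgraph, M.verts = {v : Fin n | p v} ∧ M.IsMatching := by
  -- match each member with its right or left neighbour according to the parity of the number
  -- of members before it
  refine exists_isMatching_pathGraph p
    (fun k => if Even (Nat.count p k) then k + 1 else k - 1) fun k hk hpk => ?_
  by_cases hev : Even (Nat.count p k)
  · have hodd : ¬ Even (Nat.count p (k + 1)) := by
      rwa [Nat.count_succ, if_pos hpk, Nat.even_add_one, not_not]
    have hpk1 : p (k + 1) := by
      by_contra hpk1
      exact hodd (h (k + 1) hk hpk1)
    simp [hev, hodd, hpk1, hp _ hpk1]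
  · obtain ⟨j, rfl⟩ : ∃ j, k = j + 1 :=
      Nat.exists_eq_succ_of_ne_zero (by rintro rfl; simp at hev)
    have hpj : p j := by
      by_contra hpj
      rw [Nat.count_succ, if_neg hpj] at hev
      exact hev (h j (by omega) hpj)
    have hevj : Even (Nat.count p j) := by
      rwa [Nat.count_succ, if_pos hpj, Nat.even_add_one, not_not] at hev
    simp [hev, hevj, hpj, show j < n by omega]

lemma exists_odd_run_of_not_exists_isMatching_pathGraph (p : ℕ → Prop) [DecidablePred p]
    (hp : ∀ k, p k → k < n)
    (h : ¬ ∃ M : (pathGraph n).Subgraph, M.verts = {v : Fin n | p v} ∧ M.IsMatching) :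
    ∃ s k, k ≤ n ∧ Odd (k - s) ∧ (∀ i, s ≤ i → i < k → p i) ∧ ¬ p k ∧
      ∀ i, i + 1 = s → ¬ p i := by
  have hcut : ∃ k, k ≤ n ∧ ¬ p k ∧ ¬ Even (Nat.count p k) := by
    by_contra! hall
    exact h (exists_isMatching_pathGraph_of_even_count p hp hall)
  classical
  -- `k` is the first gap with an odd count below it, `s` the start of the run ending at `k`
  obtain ⟨hkn, hpk, hoddk⟩ := Nat.find_spec hcut
  set k := Nat.find hcut
  have hrun : ∃ s, ∀ i, s ≤ i → i < k → p i := ⟨k, fun i h1 h2 => absurd h2 (not_lt.2 h1)⟩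
  have hs := Nat.find_spec hrun
  have hsk : Nat.find hrun ≤ k := Nat.find_min' hrun fun i h1 h2 => absurd h2 (not_lt.2 h1)
  set s := Nat.find hrun
  have hleft : ∀ i, i + 1 = s → ¬ p i := by
    intro i hi hpi
    refine Nat.find_min hrun (show i < s by omega) fun j hj hjk => ?_
    rcases hj.eq_or_lt with rfl | hj
    · exact hpi
    · exact hs j (by omega) hjk
  have hcount : Nat.count p k = Nat.count p s + (k - s) := by
    have := Nat.count_add p s (k - s)
    rwa [Nat.add_sub_cancel' hsk, Nat.count_of_forall (p := fun j => p (s + j))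
      fun i hi => hs _ (by omega) (by omega)] at this
  have hevs : Even (Nat.count p s) := by
    rcases Nat.eq_zero_or_eq_succ_pred s with hs0 | hs1
    · rw [hs0, Nat.count_zero]
      exact .zero
    · have hpj := hleft _ hs1.symm
      have := Nat.find_min hcut (show s.pred < k by omega)
      rw [hs1, Nat.count_succ, if_neg hpj, add_zero]
      by_contra hodd
      exact this ⟨by omega, hpj, hodd⟩
  refine ⟨s, k, hkn, ?_, hs, hpk, hleft⟩
  rw [hcount, Nat.even_add] at hoddk
  exact Nat.not_even_iff_odd.1 fun h => hoddk (iff_of_true hevs h)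

lemma even_sub_of_isMatching_pathGraph {M : (pathGraph n).Subgraph} (hM : M.IsMatching)
    {s k : ℕ} (hkn : k ≤ n) (hrun : ∀ v : Fin n, s ≤ v.val → v.val < k → v ∈ M.verts)
    (hk : ∀ v : Fin n, v.val = k → v ∉ M.verts) (hs : ∀ v : Fin n, v.val + 1 = s → v ∉ M.verts) :
    Even (k - s) := by
  have hIco : ∀ m ∈ Ico s k, m < n := fun m hm => by simp at hm; omega
  rw [← Nat.card_Ico, ← card_attachFin _ hIco]
  refine hM.even_card_of_forall_adj_mem (fun v hv => ?_) fun v hv w hvw => ?_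
  · rw [mem_coe, mem_attachFin, mem_Ico] at hv
    exact hrun v hv.1 hv.2
  · simp only [mem_attachFin, mem_Ico] at hv ⊢
    have hw := M.edge_vert hvw.symm
    have hwk : w.val ≠ k := fun h => hk w h hw
    have hws : w.val + 1 ≠ s := fun h => hs w h hw
    have := pathGraph_adj.1 (M.adj_sub hvw)
    omega

lemma exists_forall_isPairedDomSet_union_exists_mem {P : Set (Fin n)}
    (hP : ¬ IsPairedDomSet (pathGraph n) P) :
    ∃ s k : ℕ, ∀ X : Set (Fin n), IsPairedDomSet (pathGraph n) (X ∪ P) →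
      ∃ v ∈ X, v.val + 1 = s ∨ v.val = k := by
  by_cases hdom : IsDomSet (pathGraph n) P
  · classical
    have hP' : ¬ ∃ M : (pathGraph n).Subgraph,
        M.verts = {v : Fin n | v.val ∈ Fin.val '' P} ∧ M.IsMatching := by
      simpa only [Fin.val_injective.mem_set_image, Set.ofPred_mem_eq] using
        fun hM => hP ⟨hdom, hM⟩
    obtain ⟨s, k, hkn, hodd, hrun, hk, hs⟩ := exists_odd_run_of_not_exists_isMatching_pathGraph _
      (by rintro _ ⟨v, -, rfl⟩; exact v.isLt) hP'
    refine ⟨s, k, fun X ⟨_, M, hMv, hM⟩ => ?_⟩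
    by_contra! hX
    refine Nat.not_even_iff_odd.2 hodd
      (even_sub_of_isMatching_pathGraph hM hkn (fun v h1 h2 => ?_) (fun v hv => ?_) fun v hv => ?_)
    · rw [hMv]
      exact Or.inr (Fin.val_injective.mem_set_image.1 (hrun v h1 h2))
    · rw [hMv]
      rintro (h | h)
      · exact (hX v h).2 hv
      · exact hk (hv ▸ ⟨v, h, rfl⟩)
    · rw [hMv]
      rintro (h | h)
      · exact (hX v h).1 hv
      · exact hs v hv ⟨v, h, rfl⟩
  · simp only [IsDomSet, not_forall, not_or] at hdom
    obtain ⟨w, -, hw⟩ := hdom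
    refine ⟨w, w + 1, fun X hX => ?_⟩
    obtain ⟨u, hu | hu, huw⟩ := hX.exists_adj_mem w
    · exact ⟨u, hu, (pathGraph_adj.1 huw).imp id Eq.symm⟩
    · exact absurd ⟨u, hu, huw⟩ hw

lemma card_filter_val_le_two (s k : ℕ) : #{v : Fin n | v.val + 1 = s ∨ v.val = k} ≤ 2 := by
  refine (card_le_card_of_injOn Fin.val (t := {s - 1, k}) (fun v hv => ?_)
    Fin.val_injective.injOn).trans card_le_two
  simp only [coe_filter, mem_univ, true_and, Set.mem_ofPred_eq] at hv
  simp only [coe_insert, coe_singleton, Set.mem_insert_iff, Set.mem_singleton_iff]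
  omega

theorem card_parts_le_three_of_pathGraph (hn : 2 ≤ n) {π : Finpartition (univ : Finset (Fin n))}
    (hπ : IsPCPartition (pathGraph n) π) : #π.parts ≤ 3 := by
  set x : Fin n := ⟨1, by omega⟩
  have hP : π.part x ∈ π.parts := π.part_mem.2 (mem_univ x)
  obtain ⟨s, k, hsk⟩ := exists_forall_isPairedDomSet_union_exists_mem (hπ _ hP).1
  have hle : #(π.parts.erase (π.part x)) ≤ 2 := by
    refine (π.card_le_card_of_forall_exists_mem (erase_subset _ _) _ fun X hX => ?_).trans
      (card_filter_val_le_two s k)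
    obtain ⟨hXP, hX⟩ := mem_erase.1 hX
    have hxX : x ∉ X := fun hxX => hXP (π.part_eq_of_mem hX hxX).symm
    obtain ⟨v, hv, hvsk⟩ := hsk _ <| hπ.isPairedDomSet_union_part
      (fun _ => one_mem_of_isPairedDomSet_pathGraph hn) hX hxX
    exact ⟨v, by simpa using hvsk, hv⟩
  have := card_erase_add_one hP
  omega

theorem card_parts_le_two_of_pathGraph_four {π : Finpartition (univ : Finset (Fin 4))}
    (hπ : IsPCPartition (pathGraph 4) π) : #π.parts ≤ 2 := by
  by_contra! hcard
  have h1 : ∀ S, IsPairedDomSet (pathGraph 4) S → 1 ∈ S :=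
    fun _ => one_mem_of_isPairedDomSet_pathGraph le_add_self
  have h2 : ∀ S, IsPairedDomSet (pathGraph 4) S → 2 ∈ S :=
    fun _ => sub_two_mem_of_isPairedDomSet_pathGraph le_add_self
  have hP : π.part 1 ∈ π.parts := π.part_mem.2 (mem_univ _)
  by_cases h12 : π.part 1 = π.part 2
  · have h1P : (1 : Fin 4) ∈ π.part 1 := π.mem_part (mem_univ _)
    have h2P : (2 : Fin 4) ∈ π.part 1 := h12 ▸ π.mem_part (mem_univ _)
    obtain ⟨y, z, hyz, hyP, hzP⟩ := π.exists_ne_notMem_of_two_lt_card hP hcard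
    have hPeq : (π.part 1 : Set (Fin 4)) = {v : Fin 4 | v.val = 1 ∨ v.val = 2} := by
      ext v
      refine ⟨fun hv => ?_, ?_⟩
      · exact (by decide : ∀ y z v : Fin 4, y ≠ z → 1 ≠ y → 2 ≠ y → 1 ≠ z → 2 ≠ z →
          v ≠ y → v ≠ z → v.val = 1 ∨ v.val = 2) y z v hyz (ne_of_mem_of_not_mem h1P hyP)
          (ne_of_mem_of_not_mem h2P hyP) (ne_of_mem_of_not_mem h1P hzP)
          (ne_of_mem_of_not_mem h2P hzP) (ne_of_mem_of_not_mem hv hyP)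
          (ne_of_mem_of_not_mem hv hzP)
      · rintro (h | h)
        · exact (Fin.ext h : v = 1) ▸ h1P
        · exact (Fin.ext h : v = 2) ▸ h2P
    exact (hπ _ hP).1 (hPeq ▸ isPairedDomSet_pathGraph (fun k => k = 1 ∨ k = 2)
      (fun k => if k = 0 then 1 else 2) (fun k => 3 - k) (by grind) (by grind))
  · obtain ⟨X, hX⟩ : ((π.parts.erase (π.part 1)).erase (π.part 2)).Nonempty := by
      rw [← card_pos, card_erase_of_mem (mem_erase.2 ⟨Ne.symm h12, π.part_mem.2 (mem_univ _)⟩),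
        card_erase_of_mem hP]
      omega
    obtain ⟨hX2, hX1, hX⟩ := by simpa only [mem_erase] using hX
    obtain ⟨-, B, hB, -, -, -, -, hXB⟩ := hπ X hX
    exact h12 <|
      (part_eq_of_isPairedDomSet_union h1 hB (fun h => hX1 (π.part_eq_of_mem hX h).symm) hXB).trans
      (part_eq_of_isPairedDomSet_union h2 hB (fun h => hX2 (π.part_eq_of_mem hX h).symm) hXB).symm

lemma exists_isPCPartition_pathGraph_two :
    ∃ π : Finpartition (univ : Finset (Fin 2)), IsPCPartition (pathGraph 2) π ∧ #π.parts = 2 :=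
  exists_isPCPartition_card_two (fun v => v.val = 0)
    (not_isPairedDomSet_pathGraph (fun k => k = 0) 0 (by omega) (by grind))
    (not_isPairedDomSet_pathGraph (fun k => ¬ k = 0) 1 (by omega) (by grind))
    (isPairedDomSet_pathGraph_univ even_two)

lemma exists_isPCPartition_pathGraph_four :
    ∃ π : Finpartition (univ : Finset (Fin 4)), IsPCPartition (pathGraph 4) π ∧ #π.parts = 2 :=
  exists_isPCPartition_card_two (fun v => v.val ≤ 1)
    (not_isPairedDomSet_pathGraph (fun k => k ≤ 1) 3 (by omega) (by grind))
    (not_isPairedDomSet_pathGraph (fun k => ¬ k ≤ 1) 0 (by omega) (by grind))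
    (isPairedDomSet_pathGraph_univ (by decide))

lemma exists_isPCPartition_pathGraph_of_odd (hn : 3 ≤ n) (ho : Odd n) :
    ∃ π : Finpartition (univ : Finset (Fin n)), IsPCPartition (pathGraph n) π ∧ #π.parts = 3 := by
  obtain ⟨m, rfl⟩ := ho
  exact exists_isPCPartition_card_three (fun v => v.val = 0) (fun v => v.val = 2) (by grind)
    (not_isPairedDomSet_pathGraph (fun k => k = 0) 0 (by omega) (by grind))
    (not_isPairedDomSet_pathGraph (fun k => k = 2) 2 (by omega) (by grind))
    (not_isPairedDomSet_pathGraph (fun k => ¬ k = 0 ∧ ¬ k = 2) 1 (by omega) (by grind))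
    (isPairedDomSet_pathGraph (fun k => ¬ k = 2) (fun _ => 1)
      (fun k => if k ≤ 1 then 1 - k else if k % 2 = 1 then k + 1 else k - 1)
      (by grind) (by grind))
    (isPairedDomSet_pathGraph (fun k => ¬ k = 0) (fun _ => 1)
      (fun k => if k % 2 = 1 then k + 1 else k - 1) (by grind) (by grind))

lemma exists_isPCPartition_pathGraph_of_even (hn : 6 ≤ n) (he : Even n) :
    ∃ π : Finpartition (univ : Finset (Fin n)), IsPCPartition (pathGraph n) π ∧ #π.parts = 3 := by
  obtain ⟨m, rfl⟩ := he
  exact exists_isPCPartition_card_three (fun v => v.val = 0 ∨ v.val = 3)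
    (fun v => v.val = 2 ∨ v.val = 5) (by grind)
    (not_isPairedDomSet_pathGraph (fun k => k = 0 ∨ k = 3) 0 (by omega) (by grind))
    (not_isPairedDomSet_pathGraph (fun k => k = 2 ∨ k = 5) 2 (by omega) (by grind))
    (not_isPairedDomSet_pathGraph (fun k => ¬ (k = 0 ∨ k = 3) ∧ ¬ (k = 2 ∨ k = 5)) 1 (by omega)
      (by grind))
    (isPairedDomSet_pathGraph (fun k => ¬ (k = 2 ∨ k = 5)) (fun k => k - 1)
      (fun k => if k ≤ 1 then 1 - k else if k ≤ 4 then 7 - k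
        else if k % 2 = 0 then k + 1 else k - 1)
      (by grind) (by grind))
    (isPairedDomSet_pathGraph (fun k => ¬ (k = 0 ∨ k = 3)) (fun k => if k = 0 then 1 else 2)
      (fun k => if k ≤ 2 then 3 - k else if k % 2 = 0 then k + 1 else k - 1)
      (by grind) (by grind))

end PathGraph

end PCPaper

open PCPaper in
/-- `PC(P_n) = 2` for `n = 2, 4` and `PC(P_n) = 3` otherwise. -/
theorem stmt_6 (n : ℕ) (hn : 2 ≤ n) :
    pcNumber (SimpleGraph.pathGraph n) = if n = 2 ∨ n = 4 then 2 else 3 := by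
  split_ifs with h
  · rcases h with rfl | rfl
    · exact pcNumber_eq exists_isPCPartition_pathGraph_two
        fun π _ => π.card_parts_le_card.trans_eq (by simp)
    · exact pcNumber_eq exists_isPCPartition_pathGraph_four
        fun _ => card_parts_le_two_of_pathGraph_four
  · refine pcNumber_eq ?_ fun _ => card_parts_le_three_of_pathGraph hn
    rcases Nat.even_or_odd n with he | ho
    · exact exists_isPCPartition_pathGraph_of_even (by obtain ⟨m, rfl⟩ := he; omega) he
    · exact exists_isPCPartition_pathGraph_of_odd (by obtain ⟨m, rfl⟩ := ho; omega) ho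
end
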